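/- If a bounded operator A on a Hilbert space H with orthogonal decomposition H = ⊕_{m≥0} F_m satisfies (i) A commutes with an operator L⁻ mapping F_m onto F_{m+1} for each m and (ii) A commutes with its adjoint L⁺ = (L⁻)* which maps F_{m+1} to F_m and annihilates F_0, then each subspace F_m is invariant under A. -/

import Mathlib

/-!
Induction on the level `m` of `v`, moving one rung at a time: for `m = m' + 1` write
`v = Lm w` with `w ∈ F m'`, so `⟪A v, u⟫ = ⟪A w, Lp u⟫` with `Lp u` one level lower than `u`
(or zero); for `m = 0` write `u = Lm w` instead, so `⟪A v, u⟫ = ⟪A (Lp v), w⟫ = 0`.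
-/

open scoped InnerProductSpace

section Ladder

variable {𝕜 E : Type*} [RCLike 𝕜] [NormedAddCommGroup E] [InnerProductSpace 𝕜 E]
  {A Lm Lp : E →ₗ[𝕜] E}

theorem inner_apply_map_left_of_commute (hadj : ∀ u v : E, ⟪Lm u, v⟫_𝕜 = ⟪u, Lp v⟫_𝕜)
    (hAm : ∀ v : E, A (Lm v) = Lm (A v)) (w v : E) :
    ⟪A (Lm w), v⟫_𝕜 = ⟪A w, Lp v⟫_𝕜 := by
  rw [hAm, hadj]

theorem inner_apply_map_right_of_commute (hadj : ∀ u v : E, ⟪Lm u, v⟫_𝕜 = ⟪u, Lp v⟫_𝕜)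
    (hAp : ∀ v : E, A (Lp v) = Lp (A v)) (v w : E) :
    ⟪A v, Lm w⟫_𝕜 = ⟪A (Lp v), w⟫_𝕜 := by
  rw [← inner_conj_symm, hadj, inner_conj_symm, hAp]

theorem inner_apply_eq_zero_of_ladder (F : ℕ → Submodule 𝕜 E)
    (hup : ∀ m : ℕ, F (m + 1) ≤ (F m).map Lm)
    (hdown : ∀ m : ℕ, (F (m + 1)).map Lp ≤ F m)
    (hzero : ∀ v ∈ F 0, Lp v = 0)
    (hadj : ∀ u v : E, ⟪Lm u, v⟫_𝕜 = ⟪u, Lp v⟫_𝕜)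
    (hAm : ∀ v : E, A (Lm v) = Lm (A v))
    (hAp : ∀ v : E, A (Lp v) = Lp (A v)) :
    ∀ m k : ℕ, m ≠ k → ∀ v ∈ F m, ∀ u ∈ F k, ⟪A v, u⟫_𝕜 = 0 := by
  intro m
  induction m with
  | zero =>
    rintro (_ | k) hk v hv u hu
    · exact absurd rfl hk
    obtain ⟨w, -, rfl⟩ := hup k hu
    rw [inner_apply_map_right_of_commute hadj hAp, hzero v hv, map_zero, inner_zero_left]
  | succ m ih =>
    intro k hk v hv u hu
    obtain ⟨w, hw, rfl⟩ := hup m hv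
    rw [inner_apply_map_left_of_commute hadj hAm]
    cases k with
    | zero => rw [hzero u hu, inner_zero_right]
    | succ k => exact ih k (by omega) w hw _ (hdown k ⟨u, hu, rfl⟩)

end Ladder

theorem invariant_subspaces_of_commuting_ladders_general
    {H : Type*} [NormedAddCommGroup H] [InnerProductSpace ℂ H]
    (F : ℕ → Submodule ℂ H)
    (A : H →L[ℂ] H)
    (Lm Lp : H →ₗ[ℂ] H)
    (honto : ∀ m : ℕ, (F m).map Lm = F (m + 1))
    (hdown : ∀ m : ℕ, (F (m + 1)).map Lp ≤ F m)
    (hzero : ∀ v ∈ F 0, Lp v = 0)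
    (hadj : ∀ u v : H, ⟪Lm u, v⟫_ℂ = ⟪u, Lp v⟫_ℂ)
    (hAm : ∀ v : H, A (Lm v) = Lm (A v))
    (hAp : ∀ v : H, A (Lp v) = Lp (A v)) :
    ∀ m k : ℕ, m ≠ k → ∀ vm ∈ F m, ∀ vk ∈ F k, ⟪A vm, vk⟫_ℂ = 0 :=
  inner_apply_eq_zero_of_ladder (A := (A : H →ₗ[ℂ] H)) F (fun m => (honto m).ge) hdown hzero
    hadj hAm hAp

/-- If a bounded operator A on a complex Hilbert space H with an orthogonal
decomposition H = ⊕_{m≥0} F_m commutes with an operator L⁻ mapping F_m onto F_{m+1}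
and with its adjoint L⁺ (which maps F_{m+1} to F_m and annihilates F_0), then each
subspace F_m is invariant under A; equivalently ⟨A v_m, v_k⟩ = 0 whenever
v_m ∈ F_m, v_k ∈ F_k with k ≠ m. -/
theorem invariant_subspaces_of_commuting_ladders
    {H : Type*} [NormedAddCommGroup H] [InnerProductSpace ℂ H] [CompleteSpace H]
    (F : ℕ → Submodule ℂ H)
    (horth : ∀ m k : ℕ, m ≠ k → ∀ u ∈ F m, ∀ v ∈ F k, ⟪u, v⟫_ℂ = 0)
    (hdense : (⨆ m, F m).topologicalClosure = ⊤)
    (A : H →L[ℂ] H)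
    (Lm Lp : H →ₗ[ℂ] H)
    (honto : ∀ m : ℕ, (F m).map Lm = F (m + 1))
    (hdown : ∀ m : ℕ, (F (m + 1)).map Lp ≤ F m)
    (hzero : ∀ v ∈ F 0, Lp v = 0)
    (hadj : ∀ u v : H, ⟪Lm u, v⟫_ℂ = ⟪u, Lp v⟫_ℂ)
    (hAm : ∀ v : H, A (Lm v) = Lm (A v))
    (hAp : ∀ v : H, A (Lp v) = Lp (A v)) :
    ∀ m k : ℕ, m ≠ k → ∀ vm ∈ F m, ∀ vk ∈ F k, ⟪A vm, vk⟫_ℂ = 0 :=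
  invariant_subspaces_of_commuting_ladders_general F A Lm Lp honto hdown hzero hadj hAm hAp
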